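/- For every B-DMC W with finite output alphabet, I(W)² + Z(W)² ≤ 1. -/

import Mathlib

open Finset Real

/-- A binary-input discrete memoryless channel (B-DMC): nonnegative entries
and each row (fixed input) sums to 1. -/
def IsBDMC {Y : Type*} [Fintype Y] (W : Y → ZMod 2 → ℝ) : Prop :=
  (∀ y x, 0 ≤ W y x) ∧ (∀ x, ∑ y, W y x = 1)

/-- Bhattacharyya parameter Z(W). -/
noncomputable def bhatt {Y : Type*} [Fintype Y] (W : Y → ZMod 2 → ℝ) : ℝ :=
  ∑ y, Real.sqrt (W y 0 * W y 1)

/-- Symmetric capacity I(W). -/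
noncomputable def symCap {Y : Type*} [Fintype Y] (W : Y → ZMod 2 → ℝ) : ℝ :=
  ∑ y, ∑ x : ZMod 2,
    (1 / 2) * W y x * Real.logb 2 (W y x / ((1 / 2) * (W y 0 + W y 1)))

/-!
Fix an output letter with `a = W(y|0)`, `b = W(y|1)` and `p = a/(a+b)`. Its contribution to
`I(W)` is `(a+b)/2 · (1 - h(p))` in bits, and concavity of the binary entropy `h` between
`h(0) = 0` and `h(1/2) = 1` gives `0 ≤ 1 - h(p) ≤ |2p - 1|`, so that contribution is at most
`|a - b|/2` in absolute value. Together with the contribution `√(ab)` to `Z(W)` it forms a plane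
vector of length at most `√((a-b)²/4 + ab) = (a+b)/2`. Summing over the letters, the triangle
inequality bounds the length of `(I(W), Z(W))` by `∑ (a+b)/2 = 1`.
-/

namespace Real

lemma two_mul_mul_log_two_le_binEntropy {p : ℝ} (hp₀ : 0 ≤ p) (hp : p ≤ 2⁻¹) :
    2 * p * log 2 ≤ binEntropy p := by
  have h := strictConcave_binEntropy.concaveOn.2 (Set.left_mem_Icc.2 zero_le_one)
    (⟨by norm_num, by norm_num⟩ : (2⁻¹ : ℝ) ∈ Set.Icc 0 1)
    (by linarith : 0 ≤ 1 - 2 * p) (by linarith : 0 ≤ 2 * p) (by ring)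
  simp only [smul_eq_mul, binEntropy_zero, binEntropy_two_inv, mul_zero, zero_add] at h
  rwa [show 2 * p * 2⁻¹ = p by ring] at h

lemma one_sub_abs_mul_log_two_le_binEntropy {p : ℝ} (hp₀ : 0 ≤ p) (hp₁ : p ≤ 1) :
    (1 - |2 * p - 1|) * log 2 ≤ binEntropy p := by
  rcases le_total p 2⁻¹ with hp | hp
  · rw [abs_of_nonpos (by linarith)]
    linarith [two_mul_mul_log_two_le_binEntropy hp₀ hp]
  · rw [abs_of_nonneg (by linarith), ← binEntropy_one_sub]
    linarith [two_mul_mul_log_two_le_binEntropy (p := 1 - p) (by linarith) (by linarith)]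

lemma mul_log_two_mul_div (a : ℝ) {s : ℝ} (hs : 0 < s) :
    a * log (2 * (a / s)) = a * log 2 + s * (a / s * log (a / s)) := by
  rcases eq_or_ne a 0 with rfl | ha
  · simp
  rw [log_mul two_ne_zero (div_ne_zero ha hs.ne')]
  field_simp

end Real

noncomputable def symCapTerm (a b : ℝ) : ℝ :=
  1 / 2 * a * logb 2 (a / (1 / 2 * (a + b))) + 1 / 2 * b * logb 2 (b / (1 / 2 * (a + b)))

lemma symCap_eq_sum_symCapTerm {Y : Type*} [Fintype Y] (W : Y → ZMod 2 → ℝ) :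
    symCap W = ∑ y, symCapTerm (W y 0) (W y 1) :=
  sum_congr rfl fun _ _ => Fin.sum_univ_two _

lemma symCapTerm_eq {a b : ℝ} (hab : 0 < a + b) :
    symCapTerm a b = (a + b) / 2 * (1 - binEntropy (a / (a + b)) / log 2) := by
  have hdiv : ∀ x, x / (1 / 2 * (a + b)) = 2 * (x / (a + b)) := fun x => by field_simp
  have hb : b / (a + b) = 1 - a / (a + b) := by field_simp; ring
  have ha' := mul_log_two_mul_div a hab
  have hb' := mul_log_two_mul_div b hab
  rw [hb] at hb'
  rw [symCapTerm, hdiv, hdiv, hb, logb, logb, binEntropy, log_inv, log_inv]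
  set p := a / (a + b)
  clear_value p
  have hlog2 : log 2 ≠ 0 := (log_pos one_lt_two).ne'
  field_simp
  linear_combination ha' + hb'

lemma abs_symCapTerm_le {a b : ℝ} (ha : 0 ≤ a) (hb : 0 ≤ b) : |symCapTerm a b| ≤ |a - b| / 2 := by
  rcases (add_nonneg ha hb).eq_or_lt with hab | hab
  · obtain ⟨rfl, rfl⟩ : a = 0 ∧ b = 0 := ⟨by linarith, by linarith⟩
    simp [symCapTerm]
  set p := a / (a + b) with hp
  have hp₀ : 0 ≤ p := by positivity
  have hp₁ : p ≤ 1 := div_le_one_of_le₀ (by linarith) hab.le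
  have hlog2 : 0 < log 2 := log_pos one_lt_two
  have hdiff : |a - b| = (a + b) * |2 * p - 1| := by
    rw [← abs_of_pos hab, ← abs_mul, hp]
    congr 1
    field_simp
    ring
  have hgap : |1 - binEntropy p / log 2| ≤ |2 * p - 1| := by
    have hle_one : binEntropy p / log 2 ≤ 1 := (div_le_one hlog2).2 binEntropy_le_log_two
    rw [abs_le, sub_le_comm, le_div_iff₀ hlog2]
    exact ⟨by linarith [abs_nonneg (2 * p - 1)], one_sub_abs_mul_log_two_le_binEntropy hp₀ hp₁⟩
  rw [symCapTerm_eq hab, hdiff, abs_mul, abs_of_pos (by positivity : 0 < (a + b) / 2)]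
  calc (a + b) / 2 * |1 - binEntropy p / log 2| ≤ (a + b) / 2 * |2 * p - 1| := by gcongr
    _ = (a + b) * |2 * p - 1| / 2 := by ring

lemma symCapTerm_sq_add_sqrt_mul_sq_le {a b : ℝ} (ha : 0 ≤ a) (hb : 0 ≤ b) :
    symCapTerm a b ^ 2 + √(a * b) ^ 2 ≤ ((a + b) / 2) ^ 2 := by
  have h := pow_le_pow_left₀ (abs_nonneg _) (abs_symCapTerm_le ha hb) 2
  rw [sq_abs, div_pow, sq_abs] at h
  rw [sq_sqrt (mul_nonneg ha hb)]
  linarith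

lemma sq_sum_add_sq_sum_le_sq_sum {ι : Type*} (s : Finset ι) {u v w : ι → ℝ}
    (h : ∀ i ∈ s, u i ^ 2 + v i ^ 2 ≤ w i ^ 2) (hw : ∀ i ∈ s, 0 ≤ w i) :
    (∑ i ∈ s, u i) ^ 2 + (∑ i ∈ s, v i) ^ 2 ≤ (∑ i ∈ s, w i) ^ 2 := by
  have hsum : ((∑ i ∈ s, u i : ℝ) : ℂ) + (∑ i ∈ s, v i : ℝ) * Complex.I
      = ∑ i ∈ s, ((u i : ℂ) + v i * Complex.I) := by
    push_cast
    rw [sum_add_distrib, sum_mul]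
  have hnorm : ‖∑ i ∈ s, ((u i : ℂ) + v i * Complex.I)‖ ≤ ∑ i ∈ s, w i :=
    (norm_sum_le _ _).trans <| sum_le_sum fun i hi => by
      rw [Complex.norm_add_mul_I]
      exact sqrt_le_left (hw i hi) |>.2 (h i hi)
  rw [← hsum, Complex.norm_add_mul_I] at hnorm
  exact (sqrt_le_left (sum_nonneg hw)).1 hnorm

/-- I(W)² + Z(W)² ≤ 1. -/
theorem symCap_sq_add_bhatt_sq_le_one {Y : Type*} [Fintype Y]
    (W : Y → ZMod 2 → ℝ) (hW : IsBDMC W) :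
    symCap W ^ 2 + bhatt W ^ 2 ≤ 1 := by
  obtain ⟨hW_nonneg, hW_sum⟩ := hW
  have hmass : ∑ y, (W y 0 + W y 1) / 2 = 1 := by
    rw [← sum_div, sum_add_distrib, hW_sum, hW_sum]
    norm_num
  calc symCap W ^ 2 + bhatt W ^ 2 ≤ (∑ y, (W y 0 + W y 1) / 2) ^ 2 := by
        rw [symCap_eq_sum_symCapTerm, bhatt]
        exact sq_sum_add_sq_sum_le_sq_sum _
          (fun y _ => symCapTerm_sq_add_sqrt_mul_sq_le (hW_nonneg y 0) (hW_nonneg y 1))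
          (fun y _ => by linarith [hW_nonneg y 0, hW_nonneg y 1])
    _ = 1 := by rw [hmass, one_pow]
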